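/- arXiv:2012.13578 — 3 statements merged into one kernel-verified Lean document; each statement's English description precedes it below -/
import Mathlib

section
/- For every real a > 0, the median of X_a lies strictly in the interval (a - 1/3, a), where X_a has the gamma distribution with shape a and scale 1. That is, Γ(a, a)/Γ(a) < 1/2 < Γ(a, a - 1/3)/Γ(a) (the second inequality when a > 1/3, and the median is ≥ a - 1/3 trivially otherwise). -/
/-!
Splitting `Γ(a) = ∫₀^c + Γ(a, c)`, each inequality compares the mass of
`t ^ (a - 1) * exp (-t)` below and above `c`. Both comparisons are made pointwise after
parametrising the two pieces by a common interval. For `c = a`, put `t = a e^{∓w}` with `w > 0`: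
the transported integrands are `exp (a log a + a (∓w - e^{∓w}))`, and the claim reduces to
`w < sinh w`. For `c = a - 1/3 = μ³`, put `t = (μ ∓ s)³` with `0 < s < μ`: the
transported integrands are `3 exp (3μ³ log x - x³)` at `x = μ ∓ s`, and the claim reduces
to `(μ + s)³ - (μ - s)³ < 3μ³ (log (μ + s) - log (μ - s))`, which is the start of the power
series of `log (1 + u) - log (1 - u)`.
-/

open Real MeasureTheory Set Filter

noncomputable def uIG (a x : ℝ) : ℝ := ∫ t in Set.Ioi x, t ^ (a - 1) * Real.exp (-t)

theorem setIntegral_lt_setIntegral_of_forall_lt {X : Type*} [MeasurableSpace X] {μ : Measure X}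
    {s : Set X} {f g : X → ℝ} (hs : MeasurableSet s) (hμs : μ s ≠ 0)
    (hf : IntegrableOn f s μ) (hg : IntegrableOn g s μ) (hlt : ∀ x ∈ s, f x < g x) :
    ∫ x in s, f x ∂μ < ∫ x in s, g x ∂μ := by
  have hsupp : Function.support (g - f) ∩ s = s :=
    inter_eq_right.2 fun x hx => sub_ne_zero.2 (hlt x hx).ne'
  rw [← sub_pos, ← integral_sub hg hf, ← Pi.sub_def,
    setIntegral_pos_iff_support_of_nonneg_ae _ (hg.sub hf), hsupp]
  · exact pos_iff_ne_zero.2 hμs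
  · exact (ae_restrict_mem hs).mono fun x hx => sub_nonneg.2 (hlt x hx).le

theorem setIntegral_image_lt_setIntegral_image {s : Set ℝ} (hs : MeasurableSet s)
    (hs₀ : volume s ≠ 0) {f g₁ g₂ g₁' g₂' : ℝ → ℝ}
    (hg₁ : ∀ x ∈ s, HasDerivWithinAt g₁ (g₁' x) s x)
    (hg₂ : ∀ x ∈ s, HasDerivWithinAt g₂ (g₂' x) s x)
    (hinj₁ : InjOn g₁ s) (hinj₂ : InjOn g₂ s)
    (hf₁ : IntegrableOn f (g₁ '' s)) (hf₂ : IntegrableOn f (g₂ '' s))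
    (hlt : ∀ x ∈ s, |g₁' x| * f (g₁ x) < |g₂' x| * f (g₂ x)) :
    ∫ t in g₁ '' s, f t < ∫ t in g₂ '' s, f t := by
  rw [integral_image_eq_integral_abs_deriv_smul hs hg₁ hinj₁,
    integral_image_eq_integral_abs_deriv_smul hs hg₂ hinj₂]
  rw [integrableOn_image_iff_integrableOn_abs_deriv_smul hs hg₁ hinj₁] at hf₁
  rw [integrableOn_image_iff_integrableOn_abs_deriv_smul hs hg₂ hinj₂] at hf₂
  exact setIntegral_lt_setIntegral_of_forall_lt hs hs₀ hf₁ hf₂ hlt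

theorem two_mul_add_lt_log_sub_log {u : ℝ} (h₀ : 0 < u) (h₁ : u < 1) :
    2 * u + 2 * u ^ 3 / 3 < log (1 + u) - log (1 - u) := by
  have hsum := hasSum_log_sub_log_of_abs_lt_one (abs_lt.2 ⟨by linarith, h₁⟩)
  calc 2 * u + 2 * u ^ 3 / 3
      < ∑ k ∈ Finset.range 3, 2 * (1 / (2 * (k : ℝ) + 1)) * u ^ (2 * k + 1) := by
        norm_num only [Finset.sum_range_succ, Finset.sum_range_zero]
        nlinarith [pow_pos h₀ 5]
    _ ≤ log (1 + u) - log (1 - u) :=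
        sum_le_hasSum _ (fun k _ => by positivity) hsum

theorem add_pow_three_sub_sub_pow_three_lt {μ s : ℝ} (hs : 0 < s) (hsμ : s < μ) :
    (μ + s) ^ 3 - (μ - s) ^ 3 < 3 * μ ^ 3 * (log (μ + s) - log (μ - s)) := by
  have hμ : 0 < μ := hs.trans hsμ
  have hu₁ : s / μ < 1 := (div_lt_one hμ).2 hsμ
  have hu := two_mul_add_lt_log_sub_log (div_pos hs hμ) hu₁
  have hlog : log (μ + s) - log (μ - s) = log (1 + s / μ) - log (1 - s / μ) := by
    rw [show μ + s = μ * (1 + s / μ) by field_simp,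
      show μ - s = μ * (1 - s / μ) by field_simp, log_mul hμ.ne' (by positivity),
      log_mul hμ.ne' (by linarith)]
    ring
  rw [hlog]
  calc (μ + s) ^ 3 - (μ - s) ^ 3 = 3 * μ ^ 3 * (2 * (s / μ) + 2 * (s / μ) ^ 3 / 3) := by
        field_simp; ring
    _ < _ := by gcongr

noncomputable def gammaIntegrand (a t : ℝ) : ℝ := t ^ (a - 1) * exp (-t)

theorem gammaIntegrand_nonneg (a : ℝ) {t : ℝ} (ht : 0 ≤ t) : 0 ≤ gammaIntegrand a t := by
  unfold gammaIntegrand; positivity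

theorem integrableOn_gammaIntegrand {a : ℝ} (ha : 0 < a) :
    IntegrableOn (gammaIntegrand a) (Ioi 0) :=
  (GammaIntegral_convergent ha).congr_fun (fun _ _ => mul_comm _ _) measurableSet_Ioi

theorem uIG_eq_integral_gammaIntegrand (a x : ℝ) :
    uIG a x = ∫ t in Ioi x, gammaIntegrand a t := rfl

theorem Gamma_eq_integral_gammaIntegrand {a : ℝ} (ha : 0 < a) :
    Gamma a = ∫ t in Ioi 0, gammaIntegrand a t := by
  rw [Gamma_eq_integral ha]
  exact setIntegral_congr_fun measurableSet_Ioi fun _ _ => mul_comm _ _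

theorem Gamma_eq_integral_Ioo_add_uIG {a c : ℝ} (ha : 0 < a) (hc : 0 ≤ c) :
    Gamma a = (∫ t in Ioo 0 c, gammaIntegrand a t) + uIG a c := by
  have hint := integrableOn_gammaIntegrand ha
  rw [Gamma_eq_integral_gammaIntegrand ha, ← integral_Ioc_eq_integral_Ioo,
    uIG_eq_integral_gammaIntegrand, ← Ioc_union_Ioi_eq_Ioi hc]
  exact setIntegral_union (Ioc_disjoint_Ioi le_rfl) measurableSet_Ioi
    (hint.mono_set Ioc_subset_Ioi_self) (hint.mono_set (Ioi_subset_Ioi hc))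

theorem mul_gammaIntegrand {a t : ℝ} (ht : 0 < t) :
    t * gammaIntegrand a t = exp (a * log t - t) := by
  rw [gammaIntegrand, rpow_def_of_pos ht, ← mul_assoc, ← exp_log ht, log_exp, ← exp_add,
    ← exp_add]
  ring_nf

theorem sq_mul_gammaIntegrand_pow_three {a x : ℝ} (hx : 0 < x) :
    x ^ 2 * gammaIntegrand a (x ^ 3) = exp ((3 * a - 1) * log x - x ^ 3) := by
  have h := mul_gammaIntegrand (a := a) (pow_pos hx 3)
  rw [log_pow, Nat.cast_ofNat] at h
  rw [show (3 * a - 1) * log x - x ^ 3 = a * (3 * log x) - x ^ 3 - log x by ring, exp_sub, ← h,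
    exp_log hx]
  field_simp

theorem exp_mul_gammaIntegrand_lt {a w : ℝ} (ha : 0 < a) (hw : 0 < w) :
    a * exp w * gammaIntegrand a (a * exp w)
      < a * exp (-w) * gammaIntegrand a (a * exp (-w)) := by
  rw [mul_gammaIntegrand (by positivity), mul_gammaIntegrand (by positivity), exp_lt_exp,
    log_mul ha.ne' (exp_pos _).ne', log_mul ha.ne' (exp_pos _).ne', log_exp, log_exp]
  have hsinh := self_lt_sinh_iff.2 hw
  rw [sinh_eq] at hsinh
  nlinarith

theorem uIG_self_lt_integral_Ioo {a : ℝ} (ha : 0 < a) :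
    uIG a a < ∫ t in Ioo 0 a, gammaIntegrand a t := by
  have himage₁ : (fun w => a * exp w) '' Ioi 0 = Ioi a := by
    rw [← image_image (a * ·) exp, image_exp_Ioi, exp_zero, image_mul_left_Ioi ha, mul_one]
  have himage₂ : (fun w => a * exp (-w)) '' Ioi 0 = Ioo 0 a := by
    rw [← image_image (a * ·) (fun w => exp (-w)), ← image_image exp Neg.neg, image_neg_Ioi,
      neg_zero, image_exp_Iio, exp_zero, image_mul_left_Ioo ha, mul_zero, mul_one]
  have hint := integrableOn_gammaIntegrand ha
  rw [uIG_eq_integral_gammaIntegrand, ← himage₁, ← himage₂]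
  refine setIntegral_image_lt_setIntegral_image measurableSet_Ioi (by simp)
    (fun w _ => ((hasDerivAt_exp w).const_mul a).hasDerivWithinAt)
    (fun w _ => (((hasDerivAt_neg w).exp).const_mul a).hasDerivWithinAt)
    (fun x _ y _ h => exp_injective (mul_left_cancel₀ ha.ne' h))
    (fun x _ y _ h => neg_injective (exp_injective (mul_left_cancel₀ ha.ne' h)))
    (himage₁ ▸ hint.mono_set (Ioi_subset_Ioi ha.le))
    (himage₂ ▸ hint.mono_set Ioo_subset_Ioi_self) fun w (hw : 0 < w) => ?_
  rw [mul_neg_one, mul_neg, abs_neg, abs_of_pos (by positivity), abs_of_pos (by positivity)]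
  exact exp_mul_gammaIntegrand_lt ha hw

theorem sq_mul_gammaIntegrand_pow_three_lt {a μ s : ℝ} (hμa : μ ^ 3 = a - 1 / 3) (hs : 0 < s)
    (hsμ : s < μ) :
    (μ - s) ^ 2 * gammaIntegrand a ((μ - s) ^ 3)
      < (μ + s) ^ 2 * gammaIntegrand a ((μ + s) ^ 3) := by
  rw [sq_mul_gammaIntegrand_pow_three (by linarith), sq_mul_gammaIntegrand_pow_three (by linarith),
    exp_lt_exp]
  have h := add_pow_three_sub_sub_pow_three_lt hs hsμ
  rw [hμa] at h
  linarith

theorem integral_Ioo_lt_uIG_sub_one_third {a : ℝ} (ha : 1 / 3 < a) :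
    ∫ t in Ioo 0 (a - 1 / 3), gammaIntegrand a t < uIG a (a - 1 / 3) := by
  obtain ⟨μ, hμ, hμa⟩ : ∃ μ > 0, μ ^ 3 = a - 1 / 3 :=
    ⟨_, rpow_pos_of_pos (by linarith) _, rpow_inv_natCast_pow (by linarith) three_ne_zero⟩
  have hcube : StrictMono fun x : ℝ => x ^ 3 := Odd.strictMono_pow (by decide)
  have himage₁ : (fun s => (μ - s) ^ 3) '' Ioo 0 μ = Ioo 0 (a - 1 / 3) := by
    have hanti : StrictAnti fun s : ℝ => (μ - s) ^ 3 :=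
      hcube.comp_strictAnti (f := (μ - ·)) fun x y h => by linarith
    rw [ContinuousOn.image_Ioo_of_strictAntiOn hμ.le (by fun_prop) (hanti.strictAntiOn _),
      sub_self, sub_zero, hμa, zero_pow three_ne_zero]
  have himage₂ : (fun s => (μ + s) ^ 3) '' Ioo 0 μ ⊆ Ioi (a - 1 / 3) := by
    rw [(by fun_prop : Continuous fun s => (μ + s) ^ 3).image_Ioo_of_strictMono
      (hcube.comp (f := (μ + ·)) fun x y h => by linarith), add_zero, hμa]
    exact Ioo_subset_Ioi_self
  have hint := integrableOn_gammaIntegrand (a := a) (by linarith)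
  have hint₂ : IntegrableOn (gammaIntegrand a) (Ioi (a - 1 / 3)) :=
    hint.mono_set (Ioi_subset_Ioi (by linarith))
  calc ∫ t in Ioo 0 (a - 1 / 3), gammaIntegrand a t
      < ∫ t in (fun s => (μ + s) ^ 3) '' Ioo 0 μ, gammaIntegrand a t := by
        rw [← himage₁]
        refine setIntegral_image_lt_setIntegral_image measurableSet_Ioo (by simp [hμ])
          (fun s _ => (((hasDerivAt_id s).const_sub μ).pow 3).hasDerivWithinAt)
          (fun s _ => (((hasDerivAt_id s).const_add μ).pow 3).hasDerivWithinAt)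
          (fun x _ y _ h => by linarith [hcube.injective h])
          (fun x _ y _ h => by linarith [hcube.injective h])
          (himage₁ ▸ hint.mono_set Ioo_subset_Ioi_self) (hint₂.mono_set himage₂)
          fun s ⟨hs, hsμ⟩ => ?_
        norm_num only [id, mul_neg_one, mul_one, abs_neg, abs_mul, abs_pow,
          abs_of_pos (by linarith : 0 < μ - s), abs_of_pos (by linarith : 0 < μ + s)]
        rw [mul_assoc, mul_assoc]
        exact mul_lt_mul_of_pos_left (sq_mul_gammaIntegrand_pow_three_lt hμa hs hsμ) three_pos
    _ ≤ uIG a (a - 1 / 3) :=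
        setIntegral_mono_set hint₂
          ((ae_restrict_mem measurableSet_Ioi).mono fun t ht =>
            gammaIntegrand_nonneg a (by linarith [mem_Ioi.1 ht]))
          himage₂.eventuallyLE

theorem stmt5 (a : ℝ) (ha : 0 < a) :
    uIG a a / Real.Gamma a < 1/2 ∧ (1/3 < a → 1/2 < uIG a (a - 1/3) / Real.Gamma a) := by
  have hΓ : 0 < Gamma a := Gamma_pos_of_pos ha
  refine ⟨?_, fun h₃ => ?_⟩
  · have hsplit := Gamma_eq_integral_Ioo_add_uIG ha ha.le
    rw [div_lt_iff₀ hΓ]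
    linarith [uIG_self_lt_integral_Ioo ha]
  · have hsplit := Gamma_eq_integral_Ioo_add_uIG ha (by linarith : (0 : ℝ) ≤ a - 1 / 3)
    rw [lt_div_iff₀ hΓ]
    linarith [integral_Ioo_lt_uIG_sub_one_third h₃]
end

section
/- Let x1 ∈ (0,1) and x2 ∈ (1,∞) satisfy x1·e^{1-x1} = x2·e^{1-x2} (i.e., the logarithmic mean of x1 and x2 equals 1). Then x1 + x2 > 2 and x1·x2 < 1. -/
/-!
Writing `a = exp (c - u)` and `b = exp (c + u)` with `u > 0` gives `√(ab) = exp c`,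
`b - a = 2 exp c sinh u`, `a + b = 2 exp c cosh u` and `log b - log a = 2u`. The bounds
`u < sinh u < u cosh u` then place the logarithmic mean `(b - a) / (log b - log a)` strictly
between `√(ab)` and `(a + b) / 2`. Taking logarithms in `x₁ e^{1-x₁} = x₂ e^{1-x₂}` shows that
this mean equals `1` for the pair `x₁, x₂`.
-/

open Real

namespace Real

theorem sinh_lt_mul_cosh {x : ℝ} (hx : 0 < x) : sinh x < x * cosh x := by
  have hderiv (y : ℝ) : HasDerivAt (fun y => y * cosh y - sinh y) (y * sinh y) y := by
    have := ((hasDerivAt_id' y).mul (hasDerivAt_cosh y)).sub (hasDerivAt_sinh y)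
    rwa [one_mul, add_sub_cancel_left] at this
  have hmono : StrictMonoOn (fun y => y * cosh y - sinh y) (Set.Ici 0) := by
    refine strictMonoOn_of_deriv_pos (convex_Ici 0) ?_ fun y hy => ?_
    · exact (continuous_id.mul continuous_cosh |>.sub continuous_sinh).continuousOn
    · rw [interior_Ici] at hy
      rw [(hderiv y).deriv]
      exact mul_pos hy (sinh_pos_iff.mpr hy)
  have := hmono Set.self_mem_Ici hx.le hx
  simp only [zero_mul, sinh_zero, sub_self] at this
  linarith

theorem exists_eq_exp_sub_and_eq_exp_add {a b : ℝ} (ha : 0 < a) (hb : 0 < b) :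
    ∃ c u, a = exp (c - u) ∧ b = exp (c + u) :=
  ⟨(log a + log b) / 2, (log b - log a) / 2,
    by rw [show (log a + log b) / 2 - (log b - log a) / 2 = log a by ring, exp_log ha],
    by rw [show (log a + log b) / 2 + (log b - log a) / 2 = log b by ring, exp_log hb]⟩

theorem exp_add_sub_exp_sub (c u : ℝ) : exp (c + u) - exp (c - u) = 2 * exp c * sinh u := by
  rw [sinh_eq, exp_add, exp_sub, exp_neg]
  field_simp

theorem exp_sub_add_exp_add (c u : ℝ) : exp (c - u) + exp (c + u) = 2 * exp c * cosh u := by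
  rw [cosh_eq, exp_add, exp_sub, exp_neg]
  field_simp
  ring

theorem sqrt_mul_mul_log_sub_log_lt_sub {a b : ℝ} (ha : 0 < a) (hab : a < b) :
    √(a * b) * (log b - log a) < b - a := by
  obtain ⟨c, u, rfl, rfl⟩ := exists_eq_exp_sub_and_eq_exp_add ha (ha.trans hab)
  have hu : 0 < u := by rw [exp_lt_exp] at hab; linarith
  have hsqrt : √(exp (c - u) * exp (c + u)) = exp c := by
    rw [← exp_add, show c - u + (c + u) = c + c by ring, exp_add, sqrt_mul_self (exp_pos c).le]
  rw [hsqrt, log_exp, log_exp, exp_add_sub_exp_sub]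
  have := self_lt_sinh_iff.mpr hu
  nlinarith [exp_pos c]

theorem two_mul_sub_lt_add_mul_log_sub_log {a b : ℝ} (ha : 0 < a) (hab : a < b) :
    2 * (b - a) < (a + b) * (log b - log a) := by
  obtain ⟨c, u, rfl, rfl⟩ := exists_eq_exp_sub_and_eq_exp_add ha (ha.trans hab)
  have hu : 0 < u := by rw [exp_lt_exp] at hab; linarith
  rw [log_exp, log_exp, exp_add_sub_exp_sub, exp_sub_add_exp_add]
  have := sinh_lt_mul_cosh hu
  nlinarith [exp_pos c]

end Real

theorem log_sub_log_eq_sub_of_mul_exp_one_sub_eq {a b : ℝ} (ha : 0 < a) (hb : 0 < b)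
    (h : a * exp (1 - a) = b * exp (1 - b)) : log b - log a = b - a := by
  have := congrArg log h
  rw [log_mul ha.ne' (exp_pos _).ne', log_mul hb.ne' (exp_pos _).ne', log_exp, log_exp] at this
  linarith

theorem stmt12 (x1 x2 : ℝ) (h1 : x1 ∈ Set.Ioo (0:ℝ) 1) (h2 : x2 ∈ Set.Ioi (1:ℝ))
    (h : x1 * Real.exp (1 - x1) = x2 * Real.exp (1 - x2)) :
    2 < x1 + x2 ∧ x1 * x2 < 1 := by
  obtain ⟨hx1, hx1_lt_one⟩ := h1
  have hlt : x1 < x2 := hx1_lt_one.trans h2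
  have hlog := log_sub_log_eq_sub_of_mul_exp_one_sub_eq hx1 (hx1.trans hlt) h
  have hd : 0 < x2 - x1 := sub_pos.mpr hlt
  constructor
  · have hAM := two_mul_sub_lt_add_mul_log_sub_log hx1 hlt
    rw [hlog] at hAM
    nlinarith
  · have hGM := sqrt_mul_mul_log_sub_log_lt_sub hx1 hlt
    rw [hlog] at hGM
    have hsqrt : √(x1 * x2) < 1 := by nlinarith
    simpa using (sqrt_lt' one_pos).mp hsqrt
end

section
/- For each c ∈ (-1/3, 0), there exists A > 0 such that for all a ≥ A, Γ(a+1, a+1+c)/Γ(a+1) > Γ(a, a+c)/Γ(a). That is, P(X_{a+1} - (a+1) > c) > P(X_a - a > c) for all sufficiently large a. -/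
/-!
Put `x = a + c`. The recurrence `Γ(a+1, x) = a Γ(a, x) + x^a e^{-x}` together with
`Γ(a+1) = a Γ(a)` reduces the claim to `∫_x^{x+1} t^a e^{-t} dt < x^a e^{-x}`.
Writing `t = x + u`, the integrand is `x^a e^{-x} exp(a log(1 + u/x) - u)`, and
`log(1 + v) ≤ v - β v²` bounds the exponent by `(-c u - β u²)/x` for `β < 1/2`.
Integrating over `u ∈ [0, 1]` gives `x^a e^{-x} (1 - (c/2 + β/3)/x + O(1/x²))`, which is
below `x^a e^{-x}` for large `x` as soon as `β > -3c/2`; such a `β < 1/2` exists exactly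
when `c > -1/3`.
-/

open Real MeasureTheory Set Filter Topology

lemma log_one_add_le_sub_mul_sq {β v : ℝ} (hβ : 0 ≤ β) (hv : 0 ≤ v) (hvβ : v ≤ 1 / 2 - β) :
    log (1 + v) ≤ v - β * v ^ 2 := by
  have hy : 0 ≤ v - β * v ^ 2 := by nlinarith
  have hβv : 2 * β ≤ (1 - β * v) ^ 2 := by nlinarith
  have hexp := sum_le_exp_of_nonneg hy 3
  norm_num [Finset.sum_range_succ] at hexp
  rw [log_le_iff_le_exp (by linarith)]
  nlinarith [mul_le_mul_of_nonneg_left hβv (sq_nonneg v)]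

lemma exp_le_one_add_add_sq {w : ℝ} (hw : w ≤ 1) : exp w ≤ 1 + w + w ^ 2 := by
  rcases le_or_gt (-1) w with hw' | hw'
  · have := abs_exp_sub_one_sub_id_le (abs_le.2 ⟨hw', hw⟩)
    linarith [le_abs_self (exp w - 1 - w)]
  · nlinarith [exp_lt_one_iff.2 (by linarith : w < 0)]

lemma intervalIntegral_zero_one_quadratic (p q r : ℝ) :
    ∫ u in (0 : ℝ)..1, (p + q * u + r * u ^ 2) = p + q / 2 + r / 3 := by
  have hi : ∀ f : ℝ → ℝ, Continuous f → IntervalIntegrable f volume 0 1 :=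
    fun f hf => hf.intervalIntegrable 0 1
  rw [intervalIntegral.integral_add (hi _ (by fun_prop)) (hi _ (by fun_prop)),
    intervalIntegral.integral_add (hi _ (by fun_prop)) (hi _ (by fun_prop)),
    intervalIntegral.integral_const_mul, intervalIntegral.integral_const_mul]
  norm_num [integral_pow]
  ring

lemma integrableOn_Ioi_rpow_mul_exp_neg {s x : ℝ} (hs : 0 < s) (hx : 0 ≤ x) :
    IntegrableOn (fun t : ℝ => t ^ (s - 1) * exp (-t)) (Ioi x) :=
  ((GammaIntegral_convergent hs).mono_set (Ioi_subset_Ioi hx)).congr_fun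
    (fun _ _ => mul_comm _ _) measurableSet_Ioi

theorem uIG_add_one {a x : ℝ} (ha : 0 < a) (hx : 0 < x) :
    uIG (a + 1) x = a * uIG a x + x ^ a * exp (-x) := by
  have hint : IntegrableOn (fun t : ℝ => t ^ a * exp (-t)) (Ioi x) := by
    simpa using integrableOn_Ioi_rpow_mul_exp_neg (s := a + 1) (by linarith) hx.le
  have hint' := (integrableOn_Ioi_rpow_mul_exp_neg ha hx.le).const_mul a
  have hderiv : ∀ t ∈ Ici x, HasDerivAt (fun t : ℝ => -(t ^ a * exp (-t)))
      (t ^ a * exp (-t) - a * (t ^ (a - 1) * exp (-t))) t := fun t ht =>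
    (((hasDerivAt_rpow_const (Or.inl (hx.trans_le ht).ne')).mul
      (hasDerivAt_neg t).exp).neg).congr_deriv (by ring)
  have hlim : Tendsto (fun t : ℝ => -(t ^ a * exp (-t))) atTop (𝓝 0) := by
    simpa using (tendsto_rpow_mul_exp_neg_mul_atTop_nhds_zero a 1 one_pos).neg
  have hparts := integral_Ioi_of_hasDerivAt_of_tendsto' hderiv (hint.sub hint') hlim
  rw [integral_sub hint hint', integral_const_mul] at hparts
  simp only [uIG, add_sub_cancel_right]
  linarith

theorem uIG_sub_uIG {a x y : ℝ} (ha : 0 < a) (hx : 0 ≤ x) (hxy : x ≤ y) :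
    uIG a x - uIG a y = ∫ t in x..y, t ^ (a - 1) * exp (-t) :=
  intervalIntegral.integral_Ioi_sub_Ioi (integrableOn_Ioi_rpow_mul_exp_neg ha hx) hxy

lemma rpow_mul_exp_neg_add_eq {a x u : ℝ} (hx : 0 < x) (hu : 0 ≤ u) :
    (x + u) ^ a * exp (-(x + u)) = x ^ a * exp (-x) * exp (a * log (1 + u / x) - u) := by
  have h1 : 0 < 1 + u / x := by positivity
  rw [show x + u = x * (1 + u / x) by field_simp, mul_rpow hx.le h1.le, rpow_def_of_pos h1,
    show x * (1 + u / x) = x + u by field_simp, exp_sub, neg_add, exp_add, exp_neg u,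
    mul_comm (log _) a]
  ring

lemma sub_mul_log_one_add_div_sub_le {c β x u : ℝ} (hc : c ≤ 0) (hβ : 0 ≤ β) (hx : 0 < x)
    (hu : 0 ≤ u) (huβ : u / x ≤ 1 / 2 - β) :
    (x - c) * log (1 + u / x) - u ≤ (-c * u - β * u ^ 2) / x := by
  have hlog := mul_le_mul_of_nonneg_left (log_one_add_le_sub_mul_sq hβ (by positivity) huβ)
    (by linarith : 0 ≤ x - c)
  have hexpand : (x - c) * (u / x - β * (u / x) ^ 2) - u =
      (-c * u - β * u ^ 2) / x + c * β * (u / x) ^ 2 := by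
    field_simp
    ring
  nlinarith [mul_nonneg (mul_nonneg (neg_nonneg.2 hc) hβ) (sq_nonneg (u / x))]

lemma rpow_mul_exp_neg_add_le {c β x u : ℝ} (hc : -1 / 2 ≤ c) (hc' : c ≤ 0) (hβ : 0 ≤ β)
    (hβ' : β ≤ 1 / 2) (hx : 1 ≤ x) (hu : 0 ≤ u) (hu' : u ≤ 1) (huβ : u / x ≤ 1 / 2 - β) :
    (x + u) ^ (x - c) * exp (-(x + u)) ≤
      x ^ (x - c) * exp (-x) * (1 + (-c * u - β * u ^ 2) / x + 1 / (4 * x ^ 2)) := by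
  have hx0 : 0 < x := by linarith
  set w := (-c * u - β * u ^ 2) / x with hw_def
  have hnum : |-c * u - β * u ^ 2| ≤ 1 / 2 := abs_le.2 ⟨by nlinarith, by nlinarith⟩
  have hw : |w| ≤ 1 / 2 := by
    rw [abs_div, abs_of_pos hx0, div_le_iff₀ hx0]
    linarith
  have hw_sq : w ^ 2 ≤ 1 / (4 * x ^ 2) := by
    have : |-c * u - β * u ^ 2| ^ 2 ≤ 1 / 4 := by nlinarith [abs_nonneg (-c * u - β * u ^ 2)]
    rw [hw_def, div_pow, ← sq_abs, div_le_div_iff₀ (by positivity) (by positivity)]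
    nlinarith [sq_nonneg x]
  rw [rpow_mul_exp_neg_add_eq hx0 hu]
  gcongr
  calc exp ((x - c) * log (1 + u / x) - u)
      ≤ exp w := exp_le_exp.2 (sub_mul_log_one_add_div_sub_le hc' hβ hx0 hu huβ)
    _ ≤ 1 + w + w ^ 2 := exp_le_one_add_add_sq (by linarith [le_abs_self w])
    _ ≤ 1 + w + 1 / (4 * x ^ 2) := by linarith

lemma integral_rpow_mul_exp_neg_lt {c x : ℝ} (hc : -1 / 3 < c) (hc' : c < 0)
    (hx : 4 ≤ (1 + 3 * c) * x) :
    ∫ t in x..x + 1, t ^ (x - c) * exp (-t) < x ^ (x - c) * exp (-x) := by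
  -- `-3c/2 < β < 1/2`: the first makes the linear term of the integral negative,
  -- the second is needed for `log_one_add_le_sub_mul_sq`.
  set β := (1 - 3 * c) / 4 with hβ
  have hx4 : 4 ≤ x := by nlinarith
  have hx0 : 0 < x := by linarith
  set C := x ^ (x - c) * exp (-x)
  have hC : 0 < C := by positivity
  set g : ℝ → ℝ := fun u => C * (1 + (-c * u - β * u ^ 2) / x + 1 / (4 * x ^ 2))
  have hbound : ∀ t ∈ Icc x (x + 1), t ^ (x - c) * exp (-t) ≤ g (t - x) := by
    rintro t ⟨ht, ht'⟩
    have huβ : (t - x) / x ≤ 1 / 2 - β := by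
      rw [div_le_iff₀ hx0, hβ]
      linarith
    have h := rpow_mul_exp_neg_add_le (by linarith) hc'.le (by rw [hβ]; linarith)
      (by rw [hβ]; linarith) (by linarith) (by linarith) (by linarith) huβ
    rwa [add_sub_cancel] at h
  have hcont : ContinuousOn (fun t => t ^ (x - c) * exp (-t)) (uIcc x (x + 1)) :=
    ContinuousOn.mul (continuousOn_id.rpow_const fun t ht => Or.inl <| by
      rw [uIcc_of_le (by linarith)] at ht; exact (hx0.trans_le ht.1).ne') (by fun_prop)
  have hg_poly : ∀ u, g u = C * ((1 + 1 / (4 * x ^ 2)) + (-c / x) * u + (-β / x) * u ^ 2) :=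
    fun u => by simp only [g]; ring
  have hg : ∫ t in x..x + 1, g (t - x) = C * (1 - (1 + 3 * c) / (12 * x) + 1 / (4 * x ^ 2)) := by
    simp_rw [intervalIntegral.integral_comp_sub_right, add_sub_cancel_left, sub_self, hg_poly,
      intervalIntegral.integral_const_mul, intervalIntegral_zero_one_quadratic]
    rw [hβ]
    field_simp
    ring
  calc ∫ t in x..x + 1, t ^ (x - c) * exp (-t)
      ≤ ∫ t in x..x + 1, g (t - x) :=
        intervalIntegral.integral_mono_on (by linarith) hcont.intervalIntegrable
          ((by fun_prop : Continuous fun t => g (t - x)).intervalIntegrable _ _) hbound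
    _ = C * (1 - (1 + 3 * c) / (12 * x) + 1 / (4 * x ^ 2)) := hg
    _ < C := by
      refine mul_lt_of_lt_one_right hC ?_
      have : 1 / (4 * x ^ 2) < (1 + 3 * c) / (12 * x) := by
        rw [div_lt_div_iff₀ (by positivity) (by positivity)]
        nlinarith
      linarith

theorem stmt18 (c : ℝ) (hc1 : -1/3 < c) (hc2 : c < 0) :
    ∃ A : ℝ, 0 < A ∧ ∀ a : ℝ, A ≤ a →
      uIG a (a + c) / Real.Gamma a <
        uIG (a + 1) (a + 1 + c) / Real.Gamma (a + 1) := by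
  have hδ : 0 < 1 + 3 * c := by linarith
  refine ⟨5 / (1 + 3 * c), by positivity, fun a ha => ?_⟩
  have ha' : 5 ≤ (1 + 3 * c) * a := by rwa [div_le_iff₀' hδ] at ha
  have hx : 4 ≤ (1 + 3 * c) * (a + c) := by nlinarith
  have ha0 : 0 < a := by nlinarith
  have hx0 : 0 < a + c := by nlinarith
  have hrec := uIG_add_one ha0 hx0
  have hdiff := uIG_sub_uIG (a := a + 1) (by linarith) hx0.le (by linarith : a + c ≤ a + c + 1)
  have hint := integral_rpow_mul_exp_neg_lt hc1 hc2 hx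
  rw [add_sub_cancel_right] at hdiff hint
  have key : a * uIG a (a + c) < uIG (a + 1) (a + 1 + c) := by
    rw [add_right_comm]
    linarith
  have hΓ := Gamma_pos_of_pos ha0
  rw [div_lt_div_iff₀ hΓ (Gamma_pos_of_pos (by linarith)), Gamma_add_one ha0.ne']
  linarith [mul_lt_mul_of_pos_right key hΓ]
end
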